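/- Entropy inequality for reservoir-assisted feedback (Eq. (55) of the paper): Let ρ_W be a density matrix on ℂ^{d_W}, φ ∈ ℂ^{d_S} a unit vector, τ a density matrix on ℂ^{d_R}, and U a unitary on ℂ^{d_W} ⊗ ℂ^{d_S} ⊗ ℂ^{d_R}. Let σ := U(ρ_W ⊗ |φ⟩⟨φ| ⊗ τ)U†, with marginals σ_W, σ_S, σ_R (partial traces over the other two factors). Then S(σ_R) − S(τ) ≥ S(ρ_W) − S(σ_W) − S(σ_S). -/

import Mathlib

open Matrix
open scoped Kronecker Matrix ComplexOrder

noncomputable section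

/-- A density matrix: positive semidefinite with unit trace. -/
def IsDensityMatrix {n : Type*} [Fintype n] (ρ : Matrix n n ℂ) : Prop :=
  ρ.PosSemidef ∧ ρ.trace = 1

/-- von Neumann entropy `S(ρ) = -∑ λᵢ log λᵢ` (junk value 0 if not Hermitian). -/
noncomputable def vnEntropy {n : Type*} [Fintype n] [DecidableEq n]
    (ρ : Matrix n n ℂ) : ℝ :=
  if h : ρ.IsHermitian then -∑ i, (h.eigenvalues i) * Real.log (h.eigenvalues i) else 0

/-- Non-equilibrium free energy `F(ρ) = tr(Hρ) - kT S(ρ)`. -/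
noncomputable def freeEnergy {n : Type*} [Fintype n] [DecidableEq n]
    (kT : ℝ) (H ρ : Matrix n n ℂ) : ℝ :=
  (Matrix.trace (H * ρ)).re - kT * vnEntropy ρ

/-- Least eigenvalue of a Hermitian matrix (junk value 0 if not Hermitian). -/
noncomputable def lambdaMin {n : Type*} [Fintype n] [DecidableEq n]
    (H : Matrix n n ℂ) : ℝ :=
  if h : H.IsHermitian then ⨅ i, h.eigenvalues i else 0

/-- Partial trace over the second tensor factor. -/
def ptrace2 {m n : Type*} [Fintype n]
    (σ : Matrix (m × n) (m × n) ℂ) : Matrix m m ℂ :=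
  fun i j => ∑ k, σ (i, k) (j, k)

/-- Partial trace over the first tensor factor. -/
def ptrace1 {m n : Type*} [Fintype m]
    (σ : Matrix (m × n) (m × n) ℂ) : Matrix n n ℂ :=
  fun k l => ∑ i, σ (i, k) (i, l)

/-- Outer product `|v⟩⟨v|`. -/
def outer {n : Type*} (v : n → ℂ) : Matrix n n ℂ :=
  Matrix.vecMulVec v (star v)

/-- Kronecker product of vectors. -/
def kronVec {m n : Type*} (v : m → ℂ) (w : n → ℂ) : m × n → ℂ :=
  fun p => v p.1 * w p.2

/-!
Unitary conjugation preserves the spectrum, so `S(σ) = S(ρ_W ⊗ |φ⟩⟨φ| ⊗ τ) = S(ρ_W) + S(τ)`,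
the pure state contributing nothing. Subadditivity `S(ρ_AB) ≤ S(ρ_A) + S(ρ_B)`, applied to the
cut `W | SR` of `σ` and then to the cut `S | R` of `σ_SR`, gives
`S(ρ_W) + S(τ) ≤ S(σ_W) + S(σ_S) + S(σ_R)`.

Subadditivity is Klein's inequality against `ρ_A ⊗ ρ_B`: in the product of the eigenbases of the
marginals, the diagonal of `ρ_AB` is the image of its spectrum under the doubly stochastic matrix
`|W_ij|²` (`W` the change of basis), and its marginals are the spectra of `ρ_A` and `ρ_B`; the
termwise bound `p log q ≤ p log p + q - p` finishes.
-/

open Polynomial Real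

namespace Matrix

lemma isHermitian_diagonal_ofReal {n : Type*} [DecidableEq n] (d : n → ℝ) :
    (diagonal (RCLike.ofReal ∘ d) : Matrix n n ℂ).IsHermitian :=
  isHermitian_diagonal_iff.mpr fun i ↦ by simp [isSelfAdjoint_iff]

variable {n : Type*} [Fintype n] [DecidableEq n]

lemma IsHermitian.eigenvectorUnitary_mul_diagonal_mul_conjTranspose {A : Matrix n n ℂ}
    (hA : A.IsHermitian) :
    (hA.eigenvectorUnitary : Matrix n n ℂ) * diagonal (RCLike.ofReal ∘ hA.eigenvalues) *
      (hA.eigenvectorUnitary : Matrix n n ℂ)ᴴ = A := by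
  conv_rhs => rw [hA.spectral_theorem, Unitary.conjStarAlgAut_apply, star_eq_conjTranspose]

lemma IsHermitian.conjTranspose_eigenvectorUnitary_mul_mul {A : Matrix n n ℂ}
    (hA : A.IsHermitian) :
    (hA.eigenvectorUnitary : Matrix n n ℂ)ᴴ * A * (hA.eigenvectorUnitary : Matrix n n ℂ) =
      diagonal (RCLike.ofReal ∘ hA.eigenvalues) := by
  rw [← hA.conjStarAlgAut_star_eigenvectorUnitary, Unitary.conjStarAlgAut_star_apply,
    star_eq_conjTranspose]

lemma charpoly_mul_mul_conjTranspose_of_mem_unitaryGroup {U : Matrix n n ℂ}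
    (hU : U ∈ unitaryGroup n ℂ) (A : Matrix n n ℂ) : (U * A * Uᴴ).charpoly = A.charpoly := by
  rw [charpoly_mul_comm, ← Matrix.mul_assoc, ← star_eq_conjTranspose,
    (mem_unitaryGroup_iff').mp hU, Matrix.one_mul]

lemma IsHermitian.sum_comp_eigenvalues_of_charpoly_eq {A : Matrix n n ℂ} (hA : A.IsHermitian)
    {d : n → ℝ} (h : A.charpoly = ∏ i, (X - C (d i : ℂ))) (f : ℝ → ℝ) :
    ∑ i, f (hA.eigenvalues i) = ∑ i, f (d i) := by
  have roots_eq (e : n → ℝ) :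
      (∏ i, (X - C (e i : ℂ))).roots = Finset.univ.val.map (Complex.ofReal ∘ e) := by
    rw [roots_prod _ _ (Finset.prod_ne_zero_iff.mpr fun i _ ↦ X_sub_C_ne_zero _)]
    simp
  have hmap : Finset.univ.val.map hA.eigenvalues = Finset.univ.val.map d := by
    apply Multiset.map_injective Complex.ofReal_injective
    rw [Multiset.map_map, Multiset.map_map, ← roots_eq, ← roots_eq, ← h, hA.charpoly_eq]
    rfl
  have sum_eq (e : n → ℝ) : ∑ i, f (e i) = ((Finset.univ.val.map e).map f).sum := by
    rw [Multiset.map_map]; rfl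
  rw [sum_eq, sum_eq, hmap]

lemma mul_diagonal_mul_conjTranspose_apply_self (U : Matrix n n ℂ) (d : n → ℝ) (j : n) :
    (U * diagonal (RCLike.ofReal ∘ d) * Uᴴ : Matrix n n ℂ) j j =
      ∑ i, (d i * Complex.normSq (U j i) : ℝ) := by
  rw [mul_apply]
  push_cast
  refine Finset.sum_congr rfl fun i _ ↦ ?_
  rw [mul_diagonal, conjTranspose_apply, ← Complex.mul_conj]
  simp only [Function.comp_apply, RCLike.ofReal_eq_complex_ofReal, RCLike.star_def]
  ring

lemma normSq_mem_doublyStochastic {U : Matrix n n ℂ} (hU : U ∈ unitaryGroup n ℂ) :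
    (of fun i j ↦ Complex.normSq (U i j)) ∈ doublyStochastic ℝ n := by
  have sum_row {V : Matrix n n ℂ} (hV : V ∈ unitaryGroup n ℂ) (i : n) :
      ∑ j, Complex.normSq (V i j) = 1 := by
    have h := congrFun (congrFun (mem_unitaryGroup_iff.mp hV) i) i
    simp only [mul_apply, star_apply, RCLike.star_def, Complex.mul_conj, one_apply_eq] at h
    exact_mod_cast h
  refine mem_doublyStochastic_iff_sum.mpr ⟨fun i j ↦ Complex.normSq_nonneg _, sum_row hU, ?_⟩
  simpa using sum_row (Unitary.star_mem hU)

end Matrix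

-- Since `log 0 = 0`, the bound fails for `q = 0 < p`.
lemma Real.mul_log_le_mul_log_add_sub {p q : ℝ} (hp : 0 ≤ p) (hq : 0 ≤ q)
    (hpq : q = 0 → p = 0) : p * log q ≤ p * log p + q - p := by
  rcases hp.eq_or_lt with rfl | hp
  · simpa using hq
  have hq : 0 < q := hq.lt_of_ne fun h ↦ hp.ne' (hpq h.symm)
  have h := mul_le_mul_of_nonneg_left (log_le_sub_one_of_pos (div_pos hq hp)) hp.le
  rw [log_div hq.ne' hp.ne', mul_sub, mul_sub, mul_div_cancel₀ _ hp.ne'] at h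
  linarith

section Gibbs

variable {ι : Type*} [Fintype ι] [DecidableEq ι]

lemma sum_vecMul_mul_log_le {P : Matrix ι ι ℝ} (hP : P ∈ doublyStochastic ℝ ι) {p q : ι → ℝ}
    (hp : 0 ≤ p) (hq : 0 ≤ q) (hqp : ∑ j, q j ≤ ∑ i, p i)
    (hsupp : ∀ j, q j = 0 → (p ᵥ* P) j = 0) :
    ∑ j, (p ᵥ* P) j * log (q j) ≤ ∑ i, p i * log (p i) := by
  have hP0 (i j : ι) : 0 ≤ P i j := nonneg_of_mem_doublyStochastic hP
  have hterm (i j : ι) : p i * P i j * log (q j) ≤ P i j * (p i * log (p i) + q j - p i) := by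
    rcases (hP0 i j).eq_or_lt with h | h
    · simp [← h]
    rw [mul_right_comm, mul_comm _ (P i j)]
    refine mul_le_mul_of_nonneg_left (mul_log_le_mul_log_add_sub (hp i) (hq j) fun hqj ↦ ?_) h.le
    have := (Finset.sum_eq_zero_iff_of_nonneg fun i _ ↦ mul_nonneg (hp i) (hP0 i j)).mp
      (hsupp j hqj) i (Finset.mem_univ i)
    exact (mul_eq_zero.mp this).resolve_right h.ne'
  calc ∑ j, (p ᵥ* P) j * log (q j) = ∑ i, ∑ j, p i * P i j * log (q j) := by
        simp only [vecMul, dotProduct, Finset.sum_mul]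
        exact Finset.sum_comm
    _ ≤ ∑ i, ∑ j, P i j * (p i * log (p i) + q j - p i) :=
        Finset.sum_le_sum fun i _ ↦ Finset.sum_le_sum fun j _ ↦ hterm i j
    _ = ∑ i, p i * log (p i) + (∑ j, q j - ∑ i, p i) := by
        simp only [mul_add, mul_sub, Finset.sum_add_distrib, Finset.sum_sub_distrib,
          ← Finset.sum_mul, sum_row_of_mem_doublyStochastic hP, one_mul]
        rw [Finset.sum_comm (f := fun i j ↦ P i j * q j)]
        simp only [← Finset.sum_mul, sum_col_of_mem_doublyStochastic hP, one_mul]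
        ring
    _ ≤ ∑ i, p i * log (p i) := by linarith

end Gibbs

section Marginals

variable {m n : Type*} [Fintype m] [Fintype n] {c : m × n → ℝ} {a : m → ℝ} {b : n → ℝ}

lemma apply_eq_zero_of_marginals_mul_eq_zero (hc : 0 ≤ c) (ha : ∀ x, ∑ y, c (x, y) = a x)
    (hb : ∀ y, ∑ x, c (x, y) = b y) {z : m × n} (hz : a z.1 * b z.2 = 0) : c z = 0 := by
  refine le_antisymm ?_ (hc z)
  rcases mul_eq_zero.mp hz with h | h
  · exact h ▸ ha z.1 ▸ Finset.single_le_sum (fun y _ ↦ hc (z.1, y)) (Finset.mem_univ z.2)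
  · exact h ▸ hb z.2 ▸ Finset.single_le_sum (fun x _ ↦ hc (x, z.2)) (Finset.mem_univ z.1)

lemma sum_mul_log_mul_of_marginals (hc : 0 ≤ c) (ha : ∀ x, ∑ y, c (x, y) = a x)
    (hb : ∀ y, ∑ x, c (x, y) = b y) :
    ∑ z, c z * log (a z.1 * b z.2) = ∑ x, a x * log (a x) + ∑ y, b y * log (b y) := by
  have hterm (z : m × n) : c z * log (a z.1 * b z.2) = c z * log (a z.1) + c z * log (b z.2) := by
    by_cases hz : a z.1 * b z.2 = 0
    · simp [apply_eq_zero_of_marginals_mul_eq_zero hc ha hb hz]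
    · rw [log_mul (left_ne_zero_of_mul hz) (right_ne_zero_of_mul hz), mul_add]
  simp only [hterm, Finset.sum_add_distrib, Fintype.sum_prod_type]
  rw [Finset.sum_comm (f := fun x y ↦ c (x, y) * log (b y))]
  simp only [← Finset.sum_mul, ha, hb]

end Marginals

section PartialTrace

variable {m n : Type*}

lemma ptrace1_eq_ptrace2_submatrix_swap [Fintype m] (ρ : Matrix (m × n) (m × n) ℂ) :
    ptrace1 ρ = ptrace2 (ρ.submatrix Prod.swap Prod.swap) := rfl

lemma ptrace2_eq_sum_submatrix [Fintype n] (ρ : Matrix (m × n) (m × n) ℂ) :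
    ptrace2 ρ = ∑ k, ρ.submatrix (·, k) (·, k) := by
  ext i j
  simp [ptrace2, Matrix.sum_apply]

lemma Matrix.PosSemidef.ptrace2 [Fintype n] {ρ : Matrix (m × n) (m × n) ℂ} (hρ : ρ.PosSemidef) :
    (ptrace2 ρ).PosSemidef := by
  rw [ptrace2_eq_sum_submatrix]
  exact posSemidef_sum _ fun k _ ↦ hρ.submatrix _

lemma Matrix.PosSemidef.ptrace1 [Fintype m] {ρ : Matrix (m × n) (m × n) ℂ} (hρ : ρ.PosSemidef) :
    (ptrace1 ρ).PosSemidef :=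
  (hρ.submatrix Prod.swap).ptrace2

variable [Fintype m] [Fintype n]

lemma trace_ptrace2 (ρ : Matrix (m × n) (m × n) ℂ) : (ptrace2 ρ).trace = ρ.trace := by
  simp [trace, ptrace2, Fintype.sum_prod_type]

lemma trace_ptrace1 (ρ : Matrix (m × n) (m × n) ℂ) : (ptrace1 ρ).trace = ρ.trace := by
  rw [trace, trace, Fintype.sum_prod_type, Finset.sum_comm]
  rfl

lemma IsDensityMatrix.ptrace2 {ρ : Matrix (m × n) (m × n) ℂ} (hρ : IsDensityMatrix ρ) :
    IsDensityMatrix (ptrace2 ρ) :=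
  ⟨hρ.1.ptrace2, (trace_ptrace2 ρ).trans hρ.2⟩

lemma IsDensityMatrix.ptrace1 {ρ : Matrix (m × n) (m × n) ℂ} (hρ : IsDensityMatrix ρ) :
    IsDensityMatrix (ptrace1 ρ) :=
  ⟨hρ.1.ptrace1, (trace_ptrace1 ρ).trans hρ.2⟩

lemma ptrace2_conjTranspose_kronecker_mul_mul [DecidableEq n] (A : Matrix m m ℂ) {B : Matrix n n ℂ}
    (hB : B ∈ unitaryGroup n ℂ) (ρ : Matrix (m × n) (m × n) ℂ) :
    ptrace2 ((A ⊗ₖ B)ᴴ * ρ * (A ⊗ₖ B)) = Aᴴ * ptrace2 ρ * A := by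
  have hBB (b b' : n) : ∑ k, star (B b k) * B b' k = if b' = b then 1 else 0 := by
    rw [← one_apply, ← mem_unitaryGroup_iff.mp hB, mul_apply]
    exact Finset.sum_congr rfl fun k _ ↦ mul_comm _ _
  ext i j
  simp only [ptrace2, mul_apply, conjTranspose_apply, kroneckerMap_apply, Fintype.sum_prod_type,
    star_mul', Finset.sum_mul, Finset.mul_sum]
  have hterm (a a' : m) (b b' k : n) : star (A a i) * star (B b k) * ρ (a, b) (a', b') *
      (A a' j * B b' k) = star (A a i) * ρ (a, b) (a', b') * A a' j * (star (B b k) * B b' k) := by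
    ring
  simp only [hterm]
  rw [Finset.sum_comm]
  refine Finset.sum_congr rfl fun a' _ ↦ ?_
  calc
    _ = ∑ b', ∑ a, ∑ b, ∑ k, star (A a i) * ρ (a, b) (a', b') * A a' j *
        (star (B b k) * B b' k) := by
      conv_lhs => rw [Finset.sum_comm]
      refine Finset.sum_congr rfl fun b' _ ↦ ?_
      conv_lhs => rw [Finset.sum_comm]
      exact Finset.sum_congr rfl fun a _ ↦ Finset.sum_comm
    _ = _ := by
      simp only [← Finset.mul_sum, hBB, mul_ite, mul_one, mul_zero, Finset.sum_ite_eq,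
        Finset.mem_univ, if_true]
      exact Finset.sum_comm

lemma ptrace1_conjTranspose_kronecker_mul_mul [DecidableEq m] {A : Matrix m m ℂ}
    (hA : A ∈ unitaryGroup m ℂ) (B : Matrix n n ℂ) (ρ : Matrix (m × n) (m × n) ℂ) :
    ptrace1 ((A ⊗ₖ B)ᴴ * ρ * (A ⊗ₖ B)) = Bᴴ * ptrace1 ρ * B := by
  have hswap : (A ⊗ₖ B).submatrix Prod.swap Prod.swap = B ⊗ₖ A := by
    ext
    simp [mul_comm]
  rw [ptrace1_eq_ptrace2_submatrix_swap, ptrace1_eq_ptrace2_submatrix_swap,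
    ← ptrace2_conjTranspose_kronecker_mul_mul B hA, ← hswap, conjTranspose_submatrix]
  congr 1
  rw [← submatrix_mul_equiv _ _ _ (Equiv.prodComm n m),
    ← submatrix_mul_equiv _ _ _ (Equiv.prodComm n m)]
  rfl

end PartialTrace

section Entropy

variable {m n : Type*} [Fintype m] [Fintype n]

lemma IsDensityMatrix.kronecker {ρ : Matrix m m ℂ} {τ : Matrix n n ℂ} (hρ : IsDensityMatrix ρ)
    (hτ : IsDensityMatrix τ) : IsDensityMatrix (ρ ⊗ₖ τ) :=
  ⟨hρ.1.kronecker hτ.1, by rw [trace_kronecker, hρ.2, hτ.2, one_mul]⟩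

lemma isDensityMatrix_outer {φ : n → ℂ} (hφ : star φ ⬝ᵥ φ = 1) : IsDensityMatrix (outer φ) :=
  ⟨posSemidef_vecMulVec_self_star φ, by rw [outer, trace_vecMulVec, dotProduct_comm, hφ]⟩

lemma outer_mul_self {φ : n → ℂ} (hφ : star φ ⬝ᵥ φ = 1) : outer φ * outer φ = outer φ := by
  rw [outer, vecMulVec_mul_vecMulVec, hφ, one_smul]

variable [DecidableEq m] [DecidableEq n]

lemma IsDensityMatrix.sum_eigenvalues {ρ : Matrix n n ℂ} (hρ : IsDensityMatrix ρ) :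
    ∑ i, hρ.1.isHermitian.eigenvalues i = 1 := by
  have h := hρ.1.isHermitian.trace_eq_sum_eigenvalues.symm.trans hρ.2
  exact Complex.ofReal_injective (by simpa using h)

lemma IsDensityMatrix.mul_mul_conjTranspose {ρ : Matrix n n ℂ} (hρ : IsDensityMatrix ρ)
    {U : Matrix n n ℂ} (hU : U ∈ unitaryGroup n ℂ) : IsDensityMatrix (U * ρ * Uᴴ) :=
  ⟨hρ.1.mul_mul_conjTranspose_same U, by
    rw [trace_mul_cycle, ← star_eq_conjTranspose, mem_unitaryGroup_iff'.mp hU, Matrix.one_mul,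
      hρ.2]⟩

lemma vnEntropy_eq_sum_negMulLog {A : Matrix n n ℂ} (hA : A.IsHermitian) :
    vnEntropy A = ∑ i, negMulLog (hA.eigenvalues i) := by
  simp [vnEntropy, hA, negMulLog, Finset.sum_neg_distrib]

lemma vnEntropy_mul_mul_conjTranspose {U : Matrix n n ℂ} (hU : U ∈ unitaryGroup n ℂ)
    {A : Matrix n n ℂ} (hA : A.IsHermitian) : vnEntropy (U * A * Uᴴ) = vnEntropy A := by
  have hUA : (U * A * Uᴴ).IsHermitian := isHermitian_mul_mul_conjTranspose U hA
  rw [vnEntropy_eq_sum_negMulLog hA, vnEntropy_eq_sum_negMulLog hUA,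
    (hUA.eigenvalues_eq_eigenvalues_iff hA).mpr
      (charpoly_mul_mul_conjTranspose_of_mem_unitaryGroup hU A)]

lemma vnEntropy_diagonal (d : n → ℝ) :
    vnEntropy (diagonal (RCLike.ofReal ∘ d) : Matrix n n ℂ) = ∑ i, negMulLog (d i) := by
  rw [vnEntropy_eq_sum_negMulLog (isHermitian_diagonal_ofReal d),
    (isHermitian_diagonal_ofReal d).sum_comp_eigenvalues_of_charpoly_eq (d := d)
      (by simp [charpoly_diagonal])]

lemma vnEntropy_eq_zero_of_mul_self_eq {A : Matrix n n ℂ} (hA : A.IsHermitian)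
    (hAA : A * A = A) : vnEntropy A = 0 := by
  rw [vnEntropy_eq_sum_negMulLog hA]
  refine Finset.sum_eq_zero fun i _ ↦ ?_
  obtain h | h : hA.eigenvalues i = 0 ∨ hA.eigenvalues i = 1 := IsIdempotentElem.spectrum_subset ℝ
    hAA (hA.spectrum_real_eq_range_eigenvalues ▸ ⟨i, rfl⟩)
  all_goals simp [h]

lemma vnEntropy_outer {φ : n → ℂ} (hφ : star φ ⬝ᵥ φ = 1) : vnEntropy (outer φ) = 0 :=
  vnEntropy_eq_zero_of_mul_self_eq (isDensityMatrix_outer hφ).1.isHermitian (outer_mul_self hφ)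

lemma vnEntropy_kronecker {ρ : Matrix m m ℂ} {τ : Matrix n n ℂ} (hρ : IsDensityMatrix ρ)
    (hτ : IsDensityMatrix τ) : vnEntropy (ρ ⊗ₖ τ) = vnEntropy ρ + vnEntropy τ := by
  set hρH := hρ.1.isHermitian
  set hτH := hτ.1.isHermitian
  set V := (hρH.eigenvectorUnitary : Matrix m m ℂ) ⊗ₖ (hτH.eigenvectorUnitary : Matrix n n ℂ)
  have hV : V ∈ unitaryGroup (m × n) ℂ :=
    kronecker_mem_unitary hρH.eigenvectorUnitary.2 hτH.eigenvectorUnitary.2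
  have hdiag : ρ ⊗ₖ τ = V * diagonal (RCLike.ofReal ∘ fun z ↦
      hρH.eigenvalues z.1 * hτH.eigenvalues z.2) * Vᴴ := by
    conv_lhs => rw [← hρH.eigenvectorUnitary_mul_diagonal_mul_conjTranspose,
      ← hτH.eigenvectorUnitary_mul_diagonal_mul_conjTranspose]
    rw [mul_kronecker_mul, mul_kronecker_mul, diagonal_kronecker_diagonal,
      conjTranspose_kronecker]
    simp [V, Function.comp_def]
  rw [hdiag, vnEntropy_mul_mul_conjTranspose hV (isHermitian_diagonal_ofReal _),
    vnEntropy_diagonal, vnEntropy_eq_sum_negMulLog hρH, vnEntropy_eq_sum_negMulLog hτH,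
    Fintype.sum_prod_type]
  simp only [negMulLog_mul, Finset.sum_add_distrib, ← Finset.mul_sum, ← Finset.sum_mul,
    hρ.sum_eigenvalues, hτ.sum_eigenvalues, one_mul]

end Entropy

section Subadditivity

lemma sum_re_diag_mul_log_le_neg_vnEntropy {ι : Type*} [Fintype ι] [DecidableEq ι]
    {ρ : Matrix ι ι ℂ} (hρ : IsDensityMatrix ρ) {q : ι → ℝ} (hq : 0 ≤ q) (hq1 : ∑ j, q j ≤ 1)
    (hsupp : ∀ j, q j = 0 → (ρ j j).re = 0) :
    ∑ j, (ρ j j).re * log (q j) ≤ -vnEntropy ρ := by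
  set hH := hρ.1.isHermitian
  set U : Matrix ι ι ℂ := (hH.eigenvectorUnitary : Matrix ι ι ℂ)
  set P : Matrix ι ι ℝ := of fun i j ↦ Complex.normSq (Uᴴ i j)
  have hP : P ∈ doublyStochastic ℝ ι :=
    normSq_mem_doublyStochastic (Unitary.star_mem hH.eigenvectorUnitary.2)
  have hdiag (j : ι) : (ρ j j).re = (hH.eigenvalues ᵥ* P) j := by
    conv_lhs => rw [← hH.eigenvectorUnitary_mul_diagonal_mul_conjTranspose]
    rw [mul_diagonal_mul_conjTranspose_apply_self]
    simp [P, U, vecMul, dotProduct, conjTranspose_apply]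
  simp only [hdiag] at hsupp ⊢
  calc _ ≤ ∑ i, hH.eigenvalues i * log (hH.eigenvalues i) :=
        sum_vecMul_mul_log_le hP (fun i ↦ hρ.1.eigenvalues_nonneg i) hq
          (hρ.sum_eigenvalues ▸ hq1) hsupp
    _ = -vnEntropy ρ := by simp [vnEntropy_eq_sum_negMulLog hH, negMulLog]

variable {m n : Type*} [Fintype m] [DecidableEq m] [Fintype n] [DecidableEq n]

theorem vnEntropy_le_vnEntropy_ptrace2_add_vnEntropy_ptrace1 {ρ : Matrix (m × n) (m × n) ℂ}
    (hρ : IsDensityMatrix ρ) : vnEntropy ρ ≤ vnEntropy (ptrace2 ρ) + vnEntropy (ptrace1 ρ) := by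
  set hA := hρ.ptrace2.1.isHermitian
  set hB := hρ.ptrace1.1.isHermitian
  set V := (hA.eigenvectorUnitary : Matrix m m ℂ) ⊗ₖ (hB.eigenvectorUnitary : Matrix n n ℂ)
  have hV : Vᴴ ∈ unitaryGroup (m × n) ℂ := Unitary.star_mem <|
    kronecker_mem_unitary hA.eigenvectorUnitary.2 hB.eigenvectorUnitary.2
  set ρ' := Vᴴ * ρ * V
  have hρ' : IsDensityMatrix ρ' := by simpa using hρ.mul_mul_conjTranspose hV
  have hS : vnEntropy ρ' = vnEntropy ρ := by
    simpa using vnEntropy_mul_mul_conjTranspose hV hρ.1.isHermitian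
  set c : m × n → ℝ := fun z ↦ (ρ' z z).re
  have hc : 0 ≤ c := fun z ↦ (Complex.nonneg_iff.mp hρ'.1.diag_nonneg).1
  have ha (x : m) : ∑ y, c (x, y) = hA.eigenvalues x := by
    have h := congrFun (congrFun
      (ptrace2_conjTranspose_kronecker_mul_mul (hA.eigenvectorUnitary : Matrix m m ℂ)
        hB.eigenvectorUnitary.2 ρ) x) x
    rw [hA.conjTranspose_eigenvectorUnitary_mul_mul, diagonal_apply_eq] at h
    simpa [c, ptrace2, ← Complex.re_sum] using congrArg Complex.re h
  have hb (y : n) : ∑ x, c (x, y) = hB.eigenvalues y := by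
    have h := congrFun (congrFun
      (ptrace1_conjTranspose_kronecker_mul_mul hA.eigenvectorUnitary.2
        (hB.eigenvectorUnitary : Matrix n n ℂ) ρ) y) y
    rw [hB.conjTranspose_eigenvectorUnitary_mul_mul, diagonal_apply_eq] at h
    simpa [c, ptrace1, ← Complex.re_sum] using congrArg Complex.re h
  have key := sum_re_diag_mul_log_le_neg_vnEntropy hρ'
    (q := fun z ↦ hA.eigenvalues z.1 * hB.eigenvalues z.2)
    (fun z ↦ mul_nonneg (hρ.ptrace2.1.eigenvalues_nonneg _) (hρ.ptrace1.1.eigenvalues_nonneg _))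
    (by rw [Fintype.sum_prod_type, ← Finset.sum_mul_sum, hρ.ptrace2.sum_eigenvalues,
      hρ.ptrace1.sum_eigenvalues, one_mul])
    (fun z hz ↦ apply_eq_zero_of_marginals_mul_eq_zero hc ha hb hz)
  rw [sum_mul_log_mul_of_marginals hc ha hb, hS] at key
  simp only [vnEntropy_eq_sum_negMulLog hA, vnEntropy_eq_sum_negMulLog hB, negMulLog,
    neg_mul, Finset.sum_neg_distrib]
  linarith

end Subadditivity

/-- Eq. (55): entropy inequality for reservoir-assisted feedback, from
subadditivity and unitary invariance of the von Neumann entropy. -/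
theorem reservoir_feedback_entropy_inequality
    {dW dS dR : ℕ}
    (ρW : Matrix (Fin dW) (Fin dW) ℂ) (hρW : IsDensityMatrix ρW)
    (φ : Fin dS → ℂ) (hφ : star φ ⬝ᵥ φ = 1)
    (τ : Matrix (Fin dR) (Fin dR) ℂ) (hτ : IsDensityMatrix τ)
    (U : Matrix (Fin dW × Fin dS × Fin dR) (Fin dW × Fin dS × Fin dR) ℂ)
    (hU : U ∈ Matrix.unitaryGroup (Fin dW × Fin dS × Fin dR) ℂ)
    (σ : Matrix (Fin dW × Fin dS × Fin dR) (Fin dW × Fin dS × Fin dR) ℂ)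
    (hσ : σ = U * (ρW ⊗ₖ (outer φ ⊗ₖ τ)) * Uᴴ) :
    vnEntropy ρW - vnEntropy (ptrace2 σ) - vnEntropy (ptrace2 (ptrace1 σ))
      ≤ vnEntropy (ptrace1 (ptrace1 σ)) - vnEntropy τ := by
  have hφτ : IsDensityMatrix (outer φ ⊗ₖ τ) := (isDensityMatrix_outer hφ).kronecker hτ
  have hρ₀ : IsDensityMatrix (ρW ⊗ₖ (outer φ ⊗ₖ τ)) := hρW.kronecker hφτ
  have hσρ : IsDensityMatrix σ := hσ ▸ hρ₀.mul_mul_conjTranspose hU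
  have hSσ : vnEntropy σ = vnEntropy ρW + vnEntropy τ := by
    rw [hσ, vnEntropy_mul_mul_conjTranspose hU hρ₀.1.isHermitian, vnEntropy_kronecker hρW hφτ,
      vnEntropy_kronecker (isDensityMatrix_outer hφ) hτ, vnEntropy_outer hφ, zero_add]
  have hWSR := vnEntropy_le_vnEntropy_ptrace2_add_vnEntropy_ptrace1 hσρ
  have hSR := vnEntropy_le_vnEntropy_ptrace2_add_vnEntropy_ptrace1 hσρ.ptrace1
  linarith
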